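/- Let Δ₁, Δ₂ be two (N−1)-simplices in ℝ^N sharing a common (N−2)-face, with centers (barycenters) A₁, A₂ and let A₁₂ be the barycenter of the shared face. Then the broken line A₁A₁₂ ∪ A₁₂A₂ is contained in Δ₁ ∪ Δ₂ and avoids ∂(Δ₁ ∪ Δ₂), and the distance from A_i to ∂Δ_i is positive. -/

import Mathlib

/-!
Barycentric coordinates with respect to affinely independent vertices are unique, so a point all
of whose coordinates are positive, such as the barycenter, lies on no proper face. Every point of
`[A₁, A₁₂)` is a combination of `A₁` with positive weight and a point of `Δ₁`, so it has this
property in `Δ₁`; it misses `∂Δ₂` too, since `∂Δ₂ ∩ Δ₁` lies in the common face, a proper face of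
`Δ₁`. The endpoint `A₁₂`, the barycenter of the common face, lies in its relative interior.
Finally `∂Δᵢ` is closed, so it has positive distance from the barycenter `Aᵢ ∉ ∂Δᵢ`.
-/

open scoped Classical
/-- The boundary of the simplex with vertex set `V`: the union of its proper faces. -/
def simplexBoundary {N : ℕ} (V : Finset (EuclideanSpace ℝ (Fin N))) :
    Set (EuclideanSpace ℝ (Fin N)) :=
  ⋃ W ∈ V.powerset.erase V, convexHull ℝ (W : Set (EuclideanSpace ℝ (Fin N)))

section Barycentric

variable {E : Type*} [AddCommGroup E] [Module ℝ E]

def openSimplex (s : Finset E) : Set E :=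
  {x | ∃ w : E → ℝ, (∀ y ∈ s, 0 < w y) ∧ ∑ y ∈ s, w y = 1 ∧ ∑ y ∈ s, w y • y = x}

theorem openSimplex_subset_convexHull (s : Finset E) :
    openSimplex s ⊆ convexHull ℝ (s : Set E) := by
  rintro x ⟨w, hw₀, hw₁, rfl⟩
  exact Finset.mem_convexHull'.2 ⟨w, fun y hy => (hw₀ y hy).le, hw₁, rfl⟩

theorem centroid_mem_openSimplex {s : Finset E} (hs : s.Nonempty) :
    s.centroid ℝ id ∈ openSimplex s := by
  refine ⟨fun _ => (s.card : ℝ)⁻¹, fun _ _ => by positivity,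
    s.sum_centroidWeights_eq_one_of_nonempty ℝ hs, ?_⟩
  rw [s.centroid_eq_centerMass hs, s.centerMass_eq_of_sum_1 _
    (s.sum_centroidWeights_eq_one_of_nonempty ℝ hs)]
  rfl

theorem smul_add_smul_mem_openSimplex {s : Finset E} {x y : E} {a b : ℝ}
    (hx : x ∈ openSimplex s) (hy : y ∈ convexHull ℝ (s : Set E)) (ha : 0 < a) (hb : 0 ≤ b)
    (hab : a + b = 1) : a • x + b • y ∈ openSimplex s := by
  obtain ⟨w, hw₀, hw₁, rfl⟩ := hx
  obtain ⟨u, hu₀, hu₁, rfl⟩ := Finset.mem_convexHull'.1 hy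
  refine ⟨fun z => a * w z + b * u z, fun z hz => by positivity [hw₀ z hz, hu₀ z hz], ?_, ?_⟩
  · simp [Finset.sum_add_distrib, ← Finset.mul_sum, hw₁, hu₁, hab]
  · simp [add_smul, mul_smul, Finset.sum_add_distrib, Finset.smul_sum]

theorem AffineIndependent.disjoint_openSimplex_convexHull {s t : Finset E}
    (hi : AffineIndependent ℝ ((↑) : s → E)) (hts : t ⊂ s) :
    Disjoint (openSimplex s) (convexHull ℝ (t : Set E)) := by
  rw [Set.disjoint_left]
  rintro _ ⟨w, hw₀, hw₁, rfl⟩ hx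
  obtain ⟨u, -, hu₁, hux⟩ := Finset.mem_convexHull'.1 hx
  obtain ⟨z, hzs, hzt⟩ := Finset.exists_of_ssubset hts
  -- extending the coordinates `u` by zero gives a second set of coordinates with respect to `s`
  have key := hi.eq_of_sum_eq_sum_subtype (w₁ := (t : Set E).indicator u) (w₂ := w) ?_ ?_ z hzs
  · exact (hw₀ z hzs).ne' (by simpa [hzt] using key.symm)
  · rw [Finset.sum_indicator_subset _ hts.subset, hu₁, hw₁]
  · calc ∑ y ∈ s, (t : Set E).indicator u y • y
        _ = ∑ y ∈ s, (t : Set E).indicator (fun y => u y • y) y :=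
          Finset.sum_congr rfl fun y _ => (Set.indicator_smul_apply_left _ _ (fun y => y) y).symm
        _ = ∑ y ∈ s, w y • y := by rw [Finset.sum_indicator_subset _ hts.subset, hux]

theorem segment_centroid_subset_convexHull {V F : Finset E} (hFV : F ⊆ V) (hF : F.Nonempty) :
    segment ℝ (V.centroid ℝ id) (F.centroid ℝ id) ⊆ convexHull ℝ (V : Set E) :=
  (convex_convexHull ℝ _).segment_subset (V.centroid_mem_convexHull (hF.mono hFV))
    (convexHull_mono (Finset.coe_subset.2 hFV) (F.centroid_mem_convexHull hF))

end Barycentric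

theorem AffineIndependent.centroid_mem_intrinsicInterior_convexHull
    {V : Type*} [NormedAddCommGroup V] [NormedSpace ℝ V] {s : Finset V} (hs : s.Nonempty)
    (hi : AffineIndependent ℝ ((↑) : s → V)) :
    s.centroid ℝ id ∈ intrinsicInterior ℝ (convexHull ℝ (s : Set V)) := by
  have : Nonempty s := hs.coe_sort
  set S := affineSpan ℝ (s : Set V)
  have : Nonempty S := ⟨⟨_, subset_affineSpan ℝ _ hs.choose_spec⟩⟩
  -- In the direction of `S` the vertices form an affine basis, whose centroid is interior.
  let φ : S.direction ≃ᵃⁱ[ℝ] S := AffineIsometryEquiv.vaddConst ℝ (Classical.arbitrary S)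
  let e : S.direction →ᵃⁱ[ℝ] V := S.subtypeₐᵢ.comp φ.toAffineIsometry
  let p : s → S := fun x => ⟨x, subset_affineSpan ℝ _ x.2⟩
  have he : e ∘ (φ.symm ∘ p) = (↑) := funext fun x => by simp [e, p]
  have hspan : affineSpan ℝ (Set.range (φ.symm ∘ p)) = ⊤ := by
    have hp : Set.range p = ((↑) ⁻¹' (s : Set V) : Set S) :=
      Set.ext fun y => ⟨by rintro ⟨x, rfl⟩; exact x.2, fun hy => ⟨⟨y, hy⟩, rfl⟩⟩
    rw [Set.range_comp, hp]
    exact AffineMap.span_eq_top_of_surjective (φ.symm : S →ᵃ[ℝ] S.direction) φ.symm.surjective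
      (affineSpan_coe_preimage_eq_top _)
  let b : AffineBasis s ℝ S.direction :=
    ⟨φ.symm ∘ p, .of_comp e.toAffineMap (he ▸ hi), hspan⟩
  have himage : e '' convexHull ℝ (Set.range b) = convexHull ℝ (s : Set V) := by
    rw [← e.coe_toAffineMap, AffineMap.image_convexHull, e.coe_toAffineMap, ← Set.range_comp]
    exact congrArg _ ((congrArg Set.range he).trans Subtype.range_coe)
  have hcentroid : e (Finset.univ.centroid ℝ b) = s.centroid ℝ id := by
    rw [Finset.centroid_def, ← e.coe_toAffineMap, Finset.map_affineCombination _ _ _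
      (Finset.univ.sum_centroidWeights_eq_one_of_nonempty ℝ Finset.univ_nonempty),
      e.coe_toAffineMap]
    exact (congrArg _ he).trans (Finset.centroid_univ ℝ s)
  rw [← himage, AffineIsometry.intrinsicInterior_image, ← hcentroid]
  exact Set.mem_image_of_mem e
    (interior_subset_intrinsicInterior b.centroid_mem_interior_convexHull)

section SimplexBoundary

variable {N : ℕ}

local notation "𝔼" => EuclideanSpace ℝ (Fin N)

theorem simplexBoundary_subset_convexHull (V : Finset 𝔼) :
    simplexBoundary V ⊆ convexHull ℝ (V : Set 𝔼) :=
  Set.iUnion₂_subset fun _ hW =>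
    convexHull_mono (Finset.coe_subset.2 (Finset.mem_powerset.1 (Finset.mem_of_mem_erase hW)))

theorem convexHull_subset_simplexBoundary {V W : Finset 𝔼} (hWV : W ⊂ V) :
    convexHull ℝ (W : Set 𝔼) ⊆ simplexBoundary V :=
  Set.subset_biUnion_of_mem (u := fun W : Finset 𝔼 => convexHull ℝ (W : Set 𝔼))
    (Finset.mem_erase.2 ⟨hWV.ne, Finset.mem_powerset.2 hWV.subset⟩)

theorem isClosed_simplexBoundary (V : Finset 𝔼) : IsClosed (simplexBoundary V) :=
  (Finset.finite_toSet _).isClosed_biUnion fun W _ =>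
    (W.finite_toSet.isCompact_convexHull (𝕜 := ℝ)).isClosed

theorem simplexBoundary_nonempty {V : Finset 𝔼} (hV : 1 < V.card) :
    (simplexBoundary V).Nonempty := by
  obtain ⟨v, hv⟩ := Finset.card_pos.1 (zero_lt_one.trans hV)
  have hvV : {v} ⊂ V := Finset.ssubset_iff_subset_ne.2
    ⟨Finset.singleton_subset_iff.2 hv, fun h => by simp [← h] at hV⟩
  exact ⟨v, convexHull_subset_simplexBoundary hvV (subset_convexHull ℝ _ (by simp))⟩

theorem AffineIndependent.disjoint_openSimplex_simplexBoundary {V : Finset 𝔼}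
    (hi : AffineIndependent ℝ ((↑) : V → 𝔼)) : Disjoint (openSimplex V) (simplexBoundary V) :=
  Set.disjoint_iUnion₂_right.2 fun _ hW =>
    hi.disjoint_openSimplex_convexHull (Finset.ssubset_iff_subset_ne.2
      ⟨Finset.mem_powerset.1 (Finset.mem_of_mem_erase hW), Finset.ne_of_mem_erase hW⟩)

theorem AffineIndependent.infDist_centroid_simplexBoundary_pos {V : Finset 𝔼}
    (hi : AffineIndependent ℝ ((↑) : V → 𝔼)) (hV : 1 < V.card) :
    0 < Metric.infDist (V.centroid ℝ id) (simplexBoundary V) :=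
  ((isClosed_simplexBoundary V).notMem_iff_infDist_pos (simplexBoundary_nonempty hV)).1 <|
    hi.disjoint_openSimplex_simplexBoundary.notMem_of_mem_left <|
      centroid_mem_openSimplex (Finset.card_pos.1 (zero_lt_one.trans hV))

theorem AffineIndependent.disjoint_segment_centroid_sdiff_intrinsicInterior {V₁ V₂ F : Finset 𝔼}
    (hi : AffineIndependent ℝ ((↑) : V₁ → 𝔼)) (hFV : F ⊂ V₁) (hF : F.Nonempty)
    (hinter : convexHull ℝ (V₁ : Set 𝔼) ∩ convexHull ℝ (V₂ : Set 𝔼) ⊆ convexHull ℝ (F : Set 𝔼)) :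
    Disjoint (segment ℝ (V₁.centroid ℝ id) (F.centroid ℝ id))
      ((simplexBoundary V₁ ∪ simplexBoundary V₂) \
        intrinsicInterior ℝ (convexHull ℝ (F : Set 𝔼))) := by
  rw [Set.disjoint_left]
  rintro _ ⟨a, b, ha, hb, hab, rfl⟩ ⟨hbd, hint⟩
  rcases ha.eq_or_lt with rfl | ha
  · rw [zero_add] at hab
    subst hab
    refine hint ?_
    simpa using
      (hi.mono (Finset.coe_subset.2 hFV.subset)).centroid_mem_intrinsicInterior_convexHull hF
  have hx : a • V₁.centroid ℝ id + b • F.centroid ℝ id ∈ openSimplex V₁ :=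
    smul_add_smul_mem_openSimplex (centroid_mem_openSimplex (hF.mono hFV.subset))
      (convexHull_mono (Finset.coe_subset.2 hFV.subset) (F.centroid_mem_convexHull hF)) ha hb hab
  rcases hbd with hbd₁ | hbd₂
  · exact hi.disjoint_openSimplex_simplexBoundary.notMem_of_mem_left hx hbd₁
  · exact (hi.disjoint_openSimplex_convexHull hFV).notMem_of_mem_left hx
      (hinter ⟨openSimplex_subset_convexHull _ hx, simplexBoundary_subset_convexHull _ hbd₂⟩)

end SimplexBoundary

/-- Let `Δ₁, Δ₂` be two `(N-1)`-simplices in `ℝ^N` sharing a common `(N-2)`-face, with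
barycenters `A₁, A₂`, and let `A₁₂` be the barycenter of the shared face.  Then the
broken line `A₁A₁₂ ∪ A₁₂A₂` lies in `Δ₁ ∪ Δ₂` and avoids
`∂(Δ₁ ∪ Δ₂) = (∂Δ₁ ∪ ∂Δ₂) ∖ relint(Δ₁ ∩ Δ₂)`, and `dist(Aᵢ, ∂Δᵢ) > 0`. -/
theorem stmt14 (N : ℕ) (hN : 2 ≤ N) (V₁ V₂ : Finset (EuclideanSpace ℝ (Fin N)))
    (hc₁ : V₁.card = N) (hc₂ : V₂.card = N)
    (hi₁ : AffineIndependent ℝ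
      (fun x : ↥(V₁ : Set (EuclideanSpace ℝ (Fin N))) => (x : EuclideanSpace ℝ (Fin N))))
    (hi₂ : AffineIndependent ℝ
      (fun x : ↥(V₂ : Set (EuclideanSpace ℝ (Fin N))) => (x : EuclideanSpace ℝ (Fin N))))
    (hface : (V₁ ∩ V₂).card = N - 1)
    (hinter : convexHull ℝ (V₁ : Set (EuclideanSpace ℝ (Fin N))) ∩
        convexHull ℝ (V₂ : Set (EuclideanSpace ℝ (Fin N))) =
      convexHull ℝ ((V₁ ∩ V₂ : Finset (EuclideanSpace ℝ (Fin N))) :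
        Set (EuclideanSpace ℝ (Fin N)))) :
    (segment ℝ (V₁.centroid ℝ id) ((V₁ ∩ V₂).centroid ℝ id) ∪
        segment ℝ ((V₁ ∩ V₂).centroid ℝ id) (V₂.centroid ℝ id)) ⊆
      convexHull ℝ (V₁ : Set (EuclideanSpace ℝ (Fin N))) ∪
        convexHull ℝ (V₂ : Set (EuclideanSpace ℝ (Fin N))) ∧
    Disjoint
      (segment ℝ (V₁.centroid ℝ id) ((V₁ ∩ V₂).centroid ℝ id) ∪
        segment ℝ ((V₁ ∩ V₂).centroid ℝ id) (V₂.centroid ℝ id))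
      ((simplexBoundary V₁ ∪ simplexBoundary V₂) \
        intrinsicInterior ℝ (convexHull ℝ ((V₁ ∩ V₂ : Finset (EuclideanSpace ℝ (Fin N))) :
          Set (EuclideanSpace ℝ (Fin N))))) ∧
    0 < Metric.infDist (V₁.centroid ℝ id) (simplexBoundary V₁) ∧
    0 < Metric.infDist (V₂.centroid ℝ id) (simplexBoundary V₂) := by
  have hF : (V₁ ∩ V₂).Nonempty := Finset.card_pos.1 (by omega)
  have hF₁ : V₁ ∩ V₂ ⊂ V₁ :=
    Finset.ssubset_iff_subset_ne.2 ⟨Finset.inter_subset_left, fun h => by rw [h] at hface; omega⟩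
  have hF₂ : V₁ ∩ V₂ ⊂ V₂ :=
    Finset.ssubset_iff_subset_ne.2 ⟨Finset.inter_subset_right, fun h => by rw [h] at hface; omega⟩
  rw [segment_symm ℝ ((V₁ ∩ V₂).centroid ℝ id)]
  refine ⟨Set.union_subset_union (segment_centroid_subset_convexHull hF₁.subset hF)
      (segment_centroid_subset_convexHull hF₂.subset hF),
    Disjoint.union_left
      (hi₁.disjoint_segment_centroid_sdiff_intrinsicInterior hF₁ hF hinter.subset) ?_,
    hi₁.infDist_centroid_simplexBoundary_pos (by omega),
    hi₂.infDist_centroid_simplexBoundary_pos (by omega)⟩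
  rw [Set.union_comm]
  exact hi₂.disjoint_segment_centroid_sdiff_intrinsicInterior hF₂ hF
    ((Set.inter_comm _ _).trans_subset hinter.subset)
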